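/- arXiv:2412.03000 — 4 statements merged into one kernel-verified Lean document; each statement's English description precedes it below -/
import Mathlib

section
/- Let m, n be positive integers and let A assign a complex number A(r_1,…,r_{2m}) to each tuple (r_1,…,r_{2m}) ∈ {1,…,n}^{2m}. Then Det(A) = ∑_{σ_1,…,σ_{2m−2} ∈ S_n} (∏_{k=1}^{2m−2} sgn(σ_k)) · det( A(σ_1(i),…,σ_{2m−2}(i), i, j) )_{1≤i,j≤n}, i.e., the hyperdeterminant equals an alternating multi-sum of classical n×n determinants. -/
open scoped BigOperators

/-- Cayley's first hyperdeterminant of a `2m`-dimensional array of size `n` in each direction. -/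
noncomputable def hyperDet (m n : ℕ) (A : (Fin (2 * m) → Fin n) → ℂ) : ℂ :=
  ((n.factorial : ℕ) : ℂ)⁻¹ *
    ∑ σ : Fin (2 * m) → Equiv.Perm (Fin n),
      (∏ k : Fin (2 * m), ((Equiv.Perm.sign (σ k) : ℤ) : ℂ)) *
        ∏ j : Fin n, A (fun k => σ k j)

section Aux

private lemma prodSplit {M : Type*} [CommMonoid M] (N : ℕ) (g : Fin (N + 2) → M) :
    ∏ k, g k = (∏ k : Fin N, g ⟨(k : ℕ), by omega⟩) * g ⟨N, by omega⟩ * g ⟨N + 1, by omega⟩ := by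
  rw [Fin.prod_univ_castSucc, Fin.prod_univ_castSucc]
  rfl

private def splitE (N n : ℕ) :
    (Fin (N + 2) → Equiv.Perm (Fin n)) ≃
      Equiv.Perm (Fin n) × (Fin N → Equiv.Perm (Fin n)) × Equiv.Perm (Fin n) where
  toFun σ := (σ ⟨N, by omega⟩,
    fun k => σ ⟨(k : ℕ), by omega⟩ * (σ ⟨N, by omega⟩)⁻¹,
    σ ⟨N + 1, by omega⟩ * (σ ⟨N, by omega⟩)⁻¹)
  invFun x := fun k =>
    if h : (k : ℕ) < N then x.2.1 ⟨(k : ℕ), h⟩ * x.1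
    else if (k : ℕ) = N then x.1 else x.2.2 * x.1
  left_inv σ := by
    funext k
    rcases k with ⟨k, hk⟩
    by_cases h : k < N
    · simp [h]
    · by_cases h' : k = N
      · simp [h, h']
      · have h'' : k = N + 1 := by omega
        simp [h, h', h'']
  right_inv x := by
    rcases x with ⟨ρ, σ, π⟩
    refine Prod.ext ?_ (Prod.ext ?_ ?_)
    · simp
    · funext k
      simp [k.isLt]
    · simp

private lemma splitE_symm_apply (N n : ℕ)
    (x : Equiv.Perm (Fin n) × (Fin N → Equiv.Perm (Fin n)) × Equiv.Perm (Fin n))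
    (k : Fin (N + 2)) :
    (splitE N n).symm x k = if h : (k : ℕ) < N then x.2.1 ⟨(k : ℕ), h⟩ * x.1
      else if (k : ℕ) = N then x.1 else x.2.2 * x.1 := rfl

private lemma sgnC_sq {n : ℕ} (p : Equiv.Perm (Fin n)) :
    (((Equiv.Perm.sign p : ℤ) : ℂ)) ^ 2 = 1 := by
  rcases Int.units_eq_one_or (Equiv.Perm.sign p) with h | h <;> rw [h] <;> norm_num

private theorem keyLemma (L N n : ℕ) (hL : L = N + 2) (hN : Even N)
    (B : (Fin L → Fin n) → ℂ) :
    ((n.factorial : ℕ) : ℂ)⁻¹ *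
        ∑ σ : Fin L → Equiv.Perm (Fin n),
          (∏ k : Fin L, ((Equiv.Perm.sign (σ k) : ℤ) : ℂ)) *
            ∏ j : Fin n, B (fun k => σ k j)
      = ∑ σ : Fin N → Equiv.Perm (Fin n),
          (∏ k : Fin N, ((Equiv.Perm.sign (σ k) : ℤ) : ℂ)) *
            Matrix.det (Matrix.of fun i j : Fin n =>
              B (fun k => if h : (k : ℕ) < N then σ ⟨k, h⟩ i
                else if (k : ℕ) = N then i else j)) := by
  subst hL
  classical
  obtain ⟨N2, hN2⟩ := hN
  -- Step 1: reindex the big sum via splitE, performing the change of variables.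
  have h1 : (∑ σ : Fin (N + 2) → Equiv.Perm (Fin n),
        (∏ k : Fin (N + 2), ((Equiv.Perm.sign (σ k) : ℤ) : ℂ)) *
          ∏ j : Fin n, B (fun k => σ k j))
      = ∑ x : Equiv.Perm (Fin n) × (Fin N → Equiv.Perm (Fin n)) × Equiv.Perm (Fin n),
          (∏ k : Fin N, ((Equiv.Perm.sign (x.2.1 k) : ℤ) : ℂ)) *
            ((Equiv.Perm.sign x.2.2 : ℤ) : ℂ) *
            ∏ i : Fin n, B (fun k => if h : (k : ℕ) < N then x.2.1 ⟨(k : ℕ), h⟩ i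
              else if (k : ℕ) = N then i else x.2.2 i) := by
    refine (Fintype.sum_equiv (splitE N n).symm _ _ ?_).symm
    rintro ⟨ρ, σ, π⟩
    -- compute the sign product
    have hsgn : (∏ k : Fin (N + 2),
        ((Equiv.Perm.sign ((splitE N n).symm (ρ, σ, π) k) : ℤ) : ℂ))
        = (∏ k : Fin N, ((Equiv.Perm.sign (σ k) : ℤ) : ℂ)) *
            ((Equiv.Perm.sign π : ℤ) : ℂ) *
            ((Equiv.Perm.sign ρ : ℤ) : ℂ) ^ (N + 2) := by
      rw [prodSplit N (fun k => ((Equiv.Perm.sign ((splitE N n).symm (ρ, σ, π) k) : ℤ) : ℂ))]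
      simp only [splitE_symm_apply]
      simp only [Fin.isLt, dif_pos, Fin.eta, dif_neg (lt_irrefl N), if_pos rfl]
      have hne : ¬ ((N + 1 : ℕ) < N) := by omega
      have hne2 : ¬ ((N + 1 : ℕ) = N) := by omega
      simp only [dif_neg hne, if_neg hne2]
      simp only [map_mul, Units.val_mul, Int.cast_mul]
      rw [Finset.prod_mul_distrib, Finset.prod_const, Finset.card_univ, Fintype.card_fin]
      simp only [if_true]
      ring
    have hsgnρ : ((Equiv.Perm.sign ρ : ℤ) : ℂ) ^ (N + 2) = 1 := by
      have : N + 2 = 2 * (N2 + 1) := by omega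
      rw [this, pow_mul, sgnC_sq, one_pow]
    -- compute the B product
    have hB : (∏ j : Fin n, B (fun k => (splitE N n).symm (ρ, σ, π) k j))
        = ∏ i : Fin n, B (fun k => if h : (k : ℕ) < N then σ ⟨(k : ℕ), h⟩ i
            else if (k : ℕ) = N then i else π i) := by
      rw [← Equiv.prod_comp ρ (fun i => B (fun k => if h : (k : ℕ) < N then σ ⟨(k : ℕ), h⟩ i
            else if (k : ℕ) = N then i else π i))]
      refine Finset.prod_congr rfl ?_
      intro j _
      congr 1
      funext k
      rw [splitE_symm_apply]
      by_cases h : (k : ℕ) < N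
      · simp [h, Equiv.Perm.mul_apply]
      · by_cases h' : (k : ℕ) = N <;> simp [h, h', Equiv.Perm.mul_apply]
    rw [hsgn, hsgnρ, hB]
    ring
  rw [h1, Fintype.sum_prod_type]
  have h2 : (∑ x : Equiv.Perm (Fin n),
      ∑ y : (Fin N → Equiv.Perm (Fin n)) × Equiv.Perm (Fin n),
        (∏ k : Fin N, ((Equiv.Perm.sign ((x, y).2.1 k) : ℤ) : ℂ)) *
          ((Equiv.Perm.sign (x, y).2.2 : ℤ) : ℂ) *
          ∏ i : Fin n, B (fun k => if h : (k : ℕ) < N then (x, y).2.1 ⟨(k : ℕ), h⟩ i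
            else if (k : ℕ) = N then i else (x, y).2.2 i))
    = ∑ _x : Equiv.Perm (Fin n),
      ∑ y : (Fin N → Equiv.Perm (Fin n)) × Equiv.Perm (Fin n),
        (∏ k : Fin N, ((Equiv.Perm.sign (y.1 k) : ℤ) : ℂ)) *
          ((Equiv.Perm.sign y.2 : ℤ) : ℂ) *
          ∏ i : Fin n, B (fun k => if h : (k : ℕ) < N then y.1 ⟨(k : ℕ), h⟩ i
            else if (k : ℕ) = N then i else y.2 i) := rfl
  rw [h2, Finset.sum_const, Finset.card_univ, Fintype.card_perm, Fintype.card_fin, nsmul_eq_mul,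
    inv_mul_cancel_left₀ (by exact_mod_cast n.factorial_ne_zero : ((n.factorial : ℕ) : ℂ) ≠ 0)]
  rw [Fintype.sum_prod_type]
  refine Finset.sum_congr rfl fun σ _ => ?_
  rw [← Matrix.det_transpose, Matrix.det_apply', Finset.mul_sum]
  refine Finset.sum_congr rfl fun π _ => ?_
  simp only [Matrix.transpose_apply, Matrix.of_apply]
  ring

end Aux

/-- The hyperdeterminant as an alternating multi-sum of classical determinants. -/
theorem hyperDet_eq_alternating_sum_det (m n : ℕ) (hm : 0 < m) (hn : 0 < n)
    (A : (Fin (2 * m) → Fin n) → ℂ) :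
    hyperDet m n A =
      ∑ σ : Fin (2 * m - 2) → Equiv.Perm (Fin n),
        (∏ k : Fin (2 * m - 2), ((Equiv.Perm.sign (σ k) : ℤ) : ℂ)) *
          Matrix.det (Matrix.of fun i j : Fin n =>
            A (fun k => if h : (k : ℕ) < 2 * m - 2 then σ ⟨k, h⟩ i
              else if (k : ℕ) = 2 * m - 2 then i else j)) := by
  have hN : Even (2 * m - 2) := ⟨m - 1, by omega⟩
  have h := keyLemma (2 * m) (2 * m - 2) n (by omega) hN A
  rw [hyperDet]
  exact h
end

section
/- (Matsumoto's hyperdeterminantal Binet–Cauchy formula, integral form.) Let (M,μ) be a sigma-finite measure space, let m, n be positive integers, and let φ_{k,r} : M → ℂ, for 1 ≤ k ≤ 2m and 1 ≤ r ≤ n, be measurable functions such that for every tuple (r_1,…,r_{2m}) ∈ {1,…,n}^{2m} the function x ↦ ∏_{k=1}^{2m} φ_{k,r_k}(x) is integrable with respect to μ. Define A(r_1,…,r_{2m}) = ∫_M ∏_{k=1}^{2m} φ_{k,r_k}(x) dμ(x). Then Det(A) = (1/n!) ∫_{M^n} ∏_{k=1}^{2m} det( φ_{k,r}(x_s) )_{1≤r,s≤n}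 dμ(x_1)⋯dμ(x_n). -/
/-!
Expanding each of the `2m` determinants by the Leibniz formula turns the product of
determinants into a signed sum over `2m`-tuples of permutations of products over the `n`
columns. On `Mⁿ` with the product measure each such product factors into a product of `n`
one-variable integrals, which are exactly the entries of `A`.
-/

open scoped BigOperators
open MeasureTheory

open Equiv

theorem Matrix.prod_det_eq_sum_pi_perm {ι n R : Type*} [Fintype ι] [DecidableEq ι] [Fintype n]
    [DecidableEq n] [CommRing R] (A : ι → Matrix n n R) :
    ∏ k, (A k).det =
      ∑ σ : ι → Perm n, (∏ k, ((Perm.sign (σ k) : ℤ) : R)) * ∏ j, ∏ k, A k (σ k j) j := by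
  simp_rw [Matrix.det_apply, Units.smul_def, zsmul_eq_mul]
  rw [Finset.prod_univ_sum, Fintype.piFinset_univ]
  refine Finset.sum_congr rfl fun σ _ => ?_
  rw [Finset.prod_mul_distrib, Finset.prod_comm (s := Finset.univ) (t := Finset.univ)]

theorem integral_pi_prod_det_eq_sum_pi_perm {ι n M 𝕜 : Type*} [Fintype ι] [DecidableEq ι]
    [Fintype n] [DecidableEq n] [RCLike 𝕜] [MeasurableSpace M] (μ : Measure M) [SigmaFinite μ]
    (φ : ι → n → M → 𝕜) (hint : ∀ r : ι → n, Integrable (fun x => ∏ k, φ k (r k) x) μ) :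
    ∫ x : n → M, ∏ k, (Matrix.of fun r s => φ k r (x s)).det ∂Measure.pi (fun _ => μ) =
      ∑ σ : ι → Perm n,
        (∏ k, ((Perm.sign (σ k) : ℤ) : 𝕜)) * ∏ j, ∫ y, ∏ k, φ k (σ k j) y ∂μ := by
  simp_rw [Matrix.prod_det_eq_sum_pi_perm, Matrix.of_apply]
  rw [integral_finsetSum _ fun σ _ =>
    (Integrable.fintype_prod fun j => hint fun k => σ k j).const_mul _]
  refine Finset.sum_congr rfl fun σ _ => ?_
  rw [integral_const_mul, integral_fintype_prod_eq_prod (fun j y => ∏ k, φ k (σ k j) y)]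

theorem hyperDet_binet_cauchy_general (m n : ℕ)
    {M : Type*} [MeasurableSpace M] (μ : Measure M) [SigmaFinite μ]
    (φ : Fin (2 * m) → Fin n → M → ℂ)
    (hint : ∀ r : Fin (2 * m) → Fin n, Integrable (fun x => ∏ k : Fin (2 * m), φ k (r k) x) μ) :
    hyperDet m n (fun r => ∫ x, ∏ k : Fin (2 * m), φ k (r k) x ∂μ) =
      ((n.factorial : ℕ) : ℂ)⁻¹ *
        ∫ x : Fin n → M,
          ∏ k : Fin (2 * m), Matrix.det (Matrix.of fun r s : Fin n => φ k r (x s))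
          ∂(Measure.pi fun _ => μ) := by
  rw [hyperDet, integral_pi_prod_det_eq_sum_pi_perm μ φ hint]

/-- Matsumoto's hyperdeterminantal Binet–Cauchy formula, integral form. -/
theorem hyperDet_binet_cauchy (m n : ℕ) (hm : 0 < m) (hn : 0 < n)
    {M : Type*} [MeasurableSpace M] (μ : Measure M) [SigmaFinite μ]
    (φ : Fin (2 * m) → Fin n → M → ℂ)
    (hmeas : ∀ k r, Measurable (φ k r))
    (hint : ∀ r : Fin (2 * m) → Fin n, Integrable (fun x => ∏ k : Fin (2 * m), φ k (r k) x) μ) :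
    hyperDet m n (fun r => ∫ x, ∏ k : Fin (2 * m), φ k (r k) x ∂μ) =
      ((n.factorial : ℕ) : ℂ)⁻¹ *
        ∫ x : Fin n → M,
          ∏ k : Fin (2 * m), Matrix.det (Matrix.of fun r s : Fin n => φ k r (x s))
          ∂(Measure.pi fun _ => μ) :=
  hyperDet_binet_cauchy_general m n μ φ hint
end

section
/- (Matsumoto's hyperdeterminantal Binet–Cauchy formula, ordered form.) Let μ be a sigma-finite Borel measure on ℝ, let m, n be positive integers, and let φ_{k,r} : ℝ → ℂ, for 1 ≤ k ≤ 2m and 1 ≤ r ≤ n, be measurable functions such that for every tuple (r_1,…,r_{2m}) ∈ {1,…,n}^{2m} the function x ↦ ∏_{k=1}^{2m} φ_{k,r_k}(x) is integrable with respect to μ. Define A(r_1,…,r_{2m}) = ∫_ℝ ∏_{k=1}^{2m} φ_{k,r_k}(x) dμ(x). Then Det(A) = ∫_{{(x_1,…,x_n) ∈ ℝ^n : x_1 > x_2 > ⋯ > x_n}} ∏_{k=1}^{2m} det( φ_{k,r}(x_s) )_{1≤r,s≤n} dμ(x_1)⋯dμ(x_n). -/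
/-!
Expanding each determinant by the Leibniz formula and integrating term by term (Fubini), the
hyperdeterminant of the moment array is `(n!)⁻¹ ∫ ∏ₖ det (φ k r (x s))` over all of `ℝⁿ`. This
integrand is invariant under permuting the coordinates, since each of the `2m` determinants
changes by the same sign, and it vanishes unless the coordinates are distinct. The tuples with
distinct coordinates split into the `n!` chambers `x (τ 1) > ⋯ > x (τ n)`, which therefore all
contribute the integral over the chamber `x 1 > ⋯ > x n`.
-/

open scoped BigOperators
open MeasureTheory

open Equiv Function

namespace Matrix

variable {ι n R : Type*} [Fintype ι] [Fintype n] [DecidableEq n] [CommRing R]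

theorem prod_det_eq_sum [DecidableEq ι] (M : ι → Matrix n n R) :
    ∏ k, (M k).det =
      ∑ σ : ι → Perm n, (∏ k, ((Perm.sign (σ k) : ℤ) : R)) * ∏ j, ∏ k, M k (σ k j) j := by
  simp_rw [det_apply', Fintype.prod_sum, Finset.prod_mul_distrib]
  exact Finset.sum_congr rfl fun σ _ => congrArg _ Finset.prod_comm

theorem prod_det_submatrix_perm_of_even (M : ι → Matrix n n R) (hι : Even (Fintype.card ι))
    (π : Perm n) : ∏ k, ((M k).submatrix id π).det = ∏ k, (M k).det := by
  simp_rw [det_permute', Finset.prod_mul_distrib, Finset.prod_const, Finset.card_univ]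
  rcases Int.units_eq_one_or (Perm.sign π) with h | h <;> simp [h, hι.neg_one_pow]

theorem prod_det_eq_zero_of_not_injective {α : Type*} [Nonempty ι] (f : ι → n → α → R)
    {x : n → α} (hx : ¬ Injective x) : ∏ k, (of fun r s => f k r (x s)).det = 0 := by
  obtain ⟨a, b, hab, hne⟩ := not_injective_iff.mp hx
  exact Finset.prod_eq_zero (Finset.mem_univ (Classical.arbitrary ι))
    (det_zero_of_column_eq hne fun r => by simp [hab])

end Matrix

section WeylChamber

variable {α : Type*} [LinearOrder α] {n : ℕ}

def weylChamber (τ : Perm (Fin n)) : Set (Fin n → α) := {x | StrictAnti (x ∘ τ)}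

theorem weylChamber_one : weylChamber 1 = {x : Fin n → α | StrictAnti x} := rfl

theorem injective_of_mem_weylChamber {τ : Perm (Fin n)} {x : Fin n → α}
    (hx : x ∈ weylChamber τ) : Injective x := by
  simpa using hx.injective.comp τ.symm.injective

theorem pairwise_disjoint_weylChamber :
    Pairwise (Disjoint on (weylChamber : Perm (Fin n) → Set (Fin n → α))) := by
  intro τ τ' hne
  refine Set.disjoint_left.mpr fun x hx hx' => hne ?_
  have hsorted : x ∘ (Fin.revPerm.trans τ) = x ∘ (Fin.revPerm.trans τ') :=
    Tuple.unique_monotone (StrictAnti.comp hx Fin.rev_strictAnti).monotone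
      (StrictAnti.comp hx' Fin.rev_strictAnti).monotone
  ext i
  simpa using congrArg Fin.val <| injective_of_mem_weylChamber hx <| by
    simpa using congrFun hsorted (Fin.rev i)

theorem iUnion_weylChamber :
    ⋃ τ, weylChamber τ = {x : Fin n → α | Injective x} := by
  refine Set.Subset.antisymm (Set.iUnion_subset fun τ x => injective_of_mem_weylChamber) ?_
  intro x hx
  refine Set.mem_iUnion.mpr ⟨Fin.revPerm.trans (Tuple.sort x), ?_⟩
  exact ((Tuple.monotone_sort x).strictMono_of_injective
    (hx.comp (Equiv.injective _))).comp_strictAnti Fin.rev_strictAnti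

theorem measurableSet_weylChamber [TopologicalSpace α] [OrderClosedTopology α]
    [SecondCountableTopology α] [MeasurableSpace α] [OpensMeasurableSpace α]
    (τ : Perm (Fin n)) : MeasurableSet (weylChamber τ : Set (Fin n → α)) := by
  have : weylChamber τ =
      ⋂ (i : Fin n) (j : Fin n) (_ : i < j), {x : Fin n → α | x (τ j) < x (τ i)} := by
    ext x
    simp [weylChamber, StrictAnti]
  rw [this]
  exact .iInter fun i => .iInter fun j => .iInter fun _ =>
    measurableSet_lt (measurable_pi_apply _) (measurable_pi_apply _)

end WeylChamber

section Integral

variable {α : Type*} [MeasurableSpace α] {μ : Measure α} [SigmaFinite μ]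

theorem MeasurableEquiv.coe_piCongrLeft_perm_symm {ι : Type*} (τ : Perm ι) :
    ⇑(MeasurableEquiv.piCongrLeft (fun _ => α) τ.symm) = (· ∘ τ) := by
  ext x i
  simpa using MeasurableEquiv.piCongrLeft_apply_apply τ.symm (β := fun _ => α) x (τ i)

theorem setIntegral_comp_perm {ι E : Type*} [Fintype ι] [NormedAddCommGroup E] [NormedSpace ℝ E]
    (τ : Perm ι) (F : (ι → α) → E) (s : Set (ι → α)) :
    ∫ x in (· ∘ τ) ⁻¹' s, F (x ∘ τ) ∂(Measure.pi fun _ => μ) =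
      ∫ x in s, F x ∂(Measure.pi fun _ => μ) := by
  simpa only [MeasurableEquiv.coe_piCongrLeft_perm_symm] using
    (measurePreserving_piCongrLeft (fun _ => μ) τ.symm).setIntegral_preimage_emb
      (MeasurableEquiv.measurableEmbedding _) F s

variable {𝕜 : Type*} [RCLike 𝕜] {ι n : Type*} [Fintype ι] [Fintype n] [DecidableEq n]

theorem integrable_pi_prod_det (φ : ι → n → α → 𝕜)
    (hint : ∀ r : ι → n, Integrable (fun x => ∏ k, φ k (r k) x) μ) :
    Integrable (fun x : n → α => ∏ k, (Matrix.of fun r s => φ k r (x s)).det)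
      (Measure.pi fun _ => μ) := by
  classical
  simp_rw [Matrix.prod_det_eq_sum]
  exact integrable_finsetSum _ fun σ _ =>
    (Integrable.fintype_prod fun j => hint fun k => σ k j).const_mul _

theorem integral_pi_prod_det [DecidableEq ι] (φ : ι → n → α → 𝕜)
    (hint : ∀ r : ι → n, Integrable (fun x => ∏ k, φ k (r k) x) μ) :
    ∫ x : n → α, ∏ k, (Matrix.of fun r s => φ k r (x s)).det ∂(Measure.pi fun _ => μ) =
      ∑ σ : ι → Perm n, (∏ k, ((Perm.sign (σ k) : ℤ) : 𝕜)) *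
        ∏ j, ∫ t, ∏ k, φ k (σ k j) t ∂μ := by
  simp_rw [Matrix.prod_det_eq_sum, Matrix.of_apply]
  rw [integral_finsetSum _ fun σ _ =>
    (Integrable.fintype_prod fun j => hint fun k => σ k j).const_mul _]
  refine Finset.sum_congr rfl fun σ _ => ?_
  rw [integral_const_mul, integral_fintype_prod_eq_prod fun j t => ∏ k, φ k (σ k j) t]

end Integral

section Symmetrization

variable {α : Type*} [LinearOrder α] [MeasurableSpace α] {μ : Measure α} [SigmaFinite μ] {n : ℕ}
  {E : Type*} [NormedAddCommGroup E] [NormedSpace ℝ E]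

theorem setIntegral_weylChamber_eq_of_comp_perm {F : (Fin n → α) → E} {τ : Perm (Fin n)}
    (hF : ∀ x, F (x ∘ τ) = F x) :
    ∫ x in weylChamber τ, F x ∂(Measure.pi fun _ => μ) =
      ∫ x in weylChamber 1, F x ∂(Measure.pi fun _ => μ) := by
  rw [← setIntegral_comp_perm τ F (weylChamber 1)]
  simp only [hF]
  rfl

theorem integral_pi_eq_factorial_smul_setIntegral_strictAnti [TopologicalSpace α]
    [OrderClosedTopology α] [SecondCountableTopology α] [OpensMeasurableSpace α]
    {F : (Fin n → α) → E} (hF : Integrable F (Measure.pi fun _ => μ))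
    (hsymm : ∀ (τ : Perm (Fin n)) x, F (x ∘ τ) = F x)
    -- `μ` may have atoms, so the diagonals need not be null: `F` itself must vanish there.
    (hzero : ∀ x, ¬ Injective x → F x = 0) :
    ∫ x, F x ∂(Measure.pi fun _ => μ) =
      n.factorial • ∫ x in {x | StrictAnti x}, F x ∂(Measure.pi fun _ => μ) := by
  set ν : Measure (Fin n → α) := Measure.pi fun _ => μ
  calc ∫ x, F x ∂ν = ∫ x in ⋃ τ, weylChamber τ, F x ∂ν :=
        (setIntegral_eq_integral_of_forall_compl_eq_zero fun x hx =>
          hzero x (by rwa [iUnion_weylChamber] at hx)).symm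
    _ = ∑ τ, ∫ x in weylChamber τ, F x ∂ν :=
        integral_iUnion_fintype measurableSet_weylChamber pairwise_disjoint_weylChamber
          fun _ => hF.integrableOn
    _ = ∑ _τ : Perm (Fin n), ∫ x in weylChamber 1, F x ∂ν :=
        Finset.sum_congr rfl fun τ _ => setIntegral_weylChamber_eq_of_comp_perm (hsymm τ)
    _ = n.factorial • ∫ x in {x | StrictAnti x}, F x ∂ν := by
        rw [Finset.sum_const, Finset.card_univ, Fintype.card_perm, Fintype.card_fin,
          weylChamber_one]

end Symmetrization

theorem hyperDet_binet_cauchy_ordered_general (m n : ℕ) (hm : 0 < m)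
    (μ : Measure ℝ) [SigmaFinite μ]
    (φ : Fin (2 * m) → Fin n → ℝ → ℂ)
    (hint : ∀ r : Fin (2 * m) → Fin n, Integrable (fun x => ∏ k : Fin (2 * m), φ k (r k) x) μ) :
    hyperDet m n (fun r => ∫ x, ∏ k : Fin (2 * m), φ k (r k) x ∂μ) =
      ∫ x in {y : Fin n → ℝ | StrictAnti y},
        ∏ k : Fin (2 * m), Matrix.det (Matrix.of fun r s : Fin n => φ k r (x s))
        ∂(Measure.pi fun _ => μ) := by
  have : Nonempty (Fin (2 * m)) := ⟨⟨0, by omega⟩⟩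
  have hsymm (τ : Perm (Fin n)) (x : Fin n → ℝ) :
      ∏ k, (Matrix.of fun r s => φ k r ((x ∘ τ) s)).det =
        ∏ k, (Matrix.of fun r s => φ k r (x s)).det :=
    Matrix.prod_det_submatrix_perm_of_even (fun k => Matrix.of fun r s => φ k r (x s))
      (by rw [Fintype.card_fin]; exact even_two_mul m) τ
  simp only [hyperDet]
  rw [← integral_pi_prod_det φ hint,
    integral_pi_eq_factorial_smul_setIntegral_strictAnti (integrable_pi_prod_det φ hint) hsymm
      fun x hx => Matrix.prod_det_eq_zero_of_not_injective φ hx,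
    nsmul_eq_mul, inv_mul_cancel_left₀ (by exact_mod_cast n.factorial_ne_zero)]

/-- Matsumoto's hyperdeterminantal Binet–Cauchy formula, ordered form: the integral is taken
over the fundamental Weyl chamber `x₁ > x₂ > ⋯ > xₙ`. -/
theorem hyperDet_binet_cauchy_ordered (m n : ℕ) (hm : 0 < m) (hn : 0 < n)
    (μ : Measure ℝ) [SigmaFinite μ]
    (φ : Fin (2 * m) → Fin n → ℝ → ℂ)
    (hmeas : ∀ k r, Measurable (φ k r))
    (hint : ∀ r : Fin (2 * m) → Fin n, Integrable (fun x => ∏ k : Fin (2 * m), φ k (r k) x) μ) :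
    hyperDet m n (fun r => ∫ x, ∏ k : Fin (2 * m), φ k (r k) x ∂μ) =
      ∫ x in {y : Fin n → ℝ | StrictAnti y},
        ∏ k : Fin (2 * m), Matrix.det (Matrix.of fun r s : Fin n => φ k r (x s))
        ∂(Measure.pi fun _ => μ) :=
  hyperDet_binet_cauchy_ordered_general m n hm μ φ hint
end

section
/- (Strict total positivity of the exponential kernel, classical case m = 1.) Let n be a positive integer and let x_1 > x_2 > ⋯ > x_n and y_1 > y_2 > ⋯ > y_n be real numbers. Then the n×n determinant det( exp(x_i y_j) )_{1≤i,j≤n} is strictly positive. -/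
/-!
Along the segment from `y` to `x`, the nodes `(1 - s) y + s x` stay strictly decreasing, so the
determinant never vanishes there: a kernel vector would give an exponential sum with `n` distinct
frequencies and `n` zeros, which Rolle's theorem rules out. At the end point `x` the matrix
`exp (x i * x j) = ∑ₖ (x i ^ k) (x j ^ k) / k!` is positive definite, the Vandermonde matrix
making some term of the quadratic form strictly positive. By continuity the determinant is
positive on the whole segment.
-/

open Real Finset Set Function Matrix
open scoped Nat

theorem exists_strictMono_deriv_eq_zero {f f' : ℝ → ℝ} (hf : ∀ s, HasDerivAt f (f' s) s)
    {n : ℕ} {t : Fin (n + 1) → ℝ} (ht : StrictMono t) (h : ∀ i, f (t i) = 0) :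
    ∃ u : Fin n → ℝ, StrictMono u ∧ ∀ i, f' (u i) = 0 := by
  have rolle (i : Fin n) : ∃ u ∈ Ioo (t i.castSucc) (t i.succ), f' u = 0 :=
    exists_hasDerivAt_eq_zero (ht i.castSucc_lt_succ)
      (fun s _ => (hf s).continuousAt.continuousWithinAt) (by rw [h, h]) (fun s _ => hf s)
  choose u hu hfu using rolle
  refine ⟨u, fun i j hij => ?_, hfu⟩
  calc u i < t i.succ := (hu i).2
    _ ≤ t j.castSucc := ht.monotone (Fin.succ_le_castSucc_iff.mpr hij)
    _ < u j := (hu j).1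

theorem hasDerivAt_sum_mul_exp {n : ℕ} (c z : Fin n → ℝ) (s : ℝ) :
    HasDerivAt (fun s => ∑ j, c j * exp (z j * s)) (∑ j, c j * z j * exp (z j * s)) s :=
  .fun_sum fun j _ =>
    ((((hasDerivAt_id' s).const_mul (z j)).exp).const_mul (c j)).congr_deriv (by ring)

/-- Dividing by the last exponential and differentiating removes a term, and Rolle's theorem
keeps `n - 1` zeros. -/
theorem sum_mul_exp_eq_zero_of_strictMono {n : ℕ} {y : Fin n → ℝ} (hy : Injective y)
    {t : Fin n → ℝ} (ht : StrictMono t) {c : Fin n → ℝ}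
    (h : ∀ i, ∑ j, c j * exp (y j * t i) = 0) : c = 0 := by
  induction n with
  | zero => exact Subsingleton.elim _ _
  | succ n ih =>
    set z : Fin (n + 1) → ℝ := fun j => y j - y (Fin.last n)
    have hz_last : z (Fin.last n) = 0 := sub_self _
    have hz_ne (j : Fin n) : z j.castSucc ≠ 0 :=
      sub_ne_zero.mpr (hy.ne (Fin.castSucc_lt_last j).ne)
    have hzero (i : Fin (n + 1)) : ∑ j, c j * exp (z j * t i) = 0 := by
      have : ∑ j, c j * exp (z j * t i) =
          (∑ j, c j * exp (y j * t i)) * exp (-(y (Fin.last n) * t i)) := by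
        rw [sum_mul]
        refine sum_congr rfl fun j _ => ?_
        rw [mul_assoc, ← Real.exp_add]
        congr 2
        ring
      rw [this, h i, zero_mul]
    obtain ⟨u, hu, hu_zero⟩ :=
      exists_strictMono_deriv_eq_zero (hasDerivAt_sum_mul_exp c z) (t := t) ht hzero
    have hc_castSucc : (fun j : Fin n => c j.castSucc * z j.castSucc) = 0 := by
      refine ih (y := fun j => z j.castSucc) ?_ hu fun i => ?_
      · intro a b hab
        exact Fin.castSucc_injective _ (hy (by simpa [z] using hab))
      · simpa [Fin.sum_univ_castSucc, hz_last] using hu_zero i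
    have hc (j : Fin n) : c j.castSucc = 0 :=
      (mul_eq_zero.mp (congrFun hc_castSucc j)).resolve_right (hz_ne j)
    have hc_last : c (Fin.last n) = 0 := by
      simpa [Fin.sum_univ_castSucc, hc, Real.exp_ne_zero] using h 0
    funext j
    cases j using Fin.lastCases with
    | last => exact hc_last
    | cast j => exact hc j

theorem sum_mul_exp_eq_zero_of_injective {n : ℕ} {y : Fin n → ℝ} (hy : Injective y)
    {t : Fin n → ℝ} (ht : Injective t) {c : Fin n → ℝ}
    (h : ∀ i, ∑ j, c j * exp (y j * t i) = 0) : c = 0 :=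
  sum_mul_exp_eq_zero_of_strictMono hy
    ((Tuple.monotone_sort t).strictMono_of_injective (ht.comp (Tuple.sort t).injective))
    fun _ => h _

theorem det_exp_mul_ne_zero {n : ℕ} {x y : Fin n → ℝ} (hx : Injective x) (hy : Injective y) :
    (of fun i j => exp (x i * y j)).det ≠ 0 := by
  intro h
  obtain ⟨v, hv, hMv⟩ := exists_mulVec_eq_zero_iff.mpr h
  refine hv (sum_mul_exp_eq_zero_of_injective hy hx fun i => ?_)
  simpa [mulVec, dotProduct, mul_comm, mul_left_comm] using congrFun hMv i

theorem hasSum_dotProduct_mulVec_exp_mul {ι : Type*} [Fintype ι] (x c : ι → ℝ) :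
    HasSum (fun k => (∑ i, c i * x i ^ k) ^ 2 / k !)
      (c ⬝ᵥ (of fun i j => exp (x i * x j)) *ᵥ c) := by
  have hexp (i j : ι) : HasSum (fun k => c i * c j * ((x i * x j) ^ k / k !))
      (c i * c j * exp (x i * x j)) :=
    (Real.exp_eq_exp_ℝ ▸ NormedSpace.expSeries_div_hasSum_exp (x i * x j)).mul_left _
  have hterm (k : ℕ) : (∑ i, c i * x i ^ k) ^ 2 / k ! =
      ∑ i, ∑ j, c i * c j * ((x i * x j) ^ k / k !) := by
    simp only [sq, sum_mul_sum, sum_div]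
    refine sum_congr rfl fun i _ => sum_congr rfl fun j _ => ?_
    ring
  have hquad : c ⬝ᵥ (of fun i j => exp (x i * x j)) *ᵥ c =
      ∑ i, ∑ j, c i * c j * exp (x i * x j) := by
    simp only [dotProduct, mulVec, of_apply, mul_sum]
    refine sum_congr rfl fun i _ => sum_congr rfl fun j _ => ?_
    ring
  rw [funext hterm, hquad]
  exact hasSum_sum fun i _ => hasSum_sum fun j _ => hexp i j

theorem posDef_exp_mul_self {n : ℕ} {x : Fin n → ℝ} (hx : Injective x) :
    (of fun i j => exp (x i * x j)).PosDef := by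
  refine .of_dotProduct_mulVec_pos ?_ fun c hc => ?_
  · ext i j
    simp [mul_comm]
  obtain ⟨k, hk⟩ : ∃ k, ∑ i, c i * x i ^ k ≠ 0 := by
    by_contra! h
    refine hc (eq_zero_of_vecMul_eq_zero (det_vandermonde_ne_zero_iff.mpr hx) (funext fun k => ?_))
    simpa [vecMul, dotProduct, vandermonde] using h k
  have hs := hasSum_dotProduct_mulVec_exp_mul x c
  rw [star_trivial, ← hs.tsum_eq]
  exact hs.summable.tsum_pos (fun k => by positivity) k (by positivity)

theorem IsPreconnected.pos_of_ne_zero {X : Type*} [TopologicalSpace X] {s : Set X}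
    (hs : IsPreconnected s) {f : X → ℝ} (hf : ContinuousOn f s) (hne : ∀ x ∈ s, f x ≠ 0)
    {a b : X} (ha : a ∈ s) (hb : b ∈ s) (hfb : 0 < f b) : 0 < f a := by
  by_contra! hfa
  obtain ⟨x, hx, hfx⟩ := hs.intermediate_value ha hb hf ⟨hfa, hfb.le⟩
  exact hne x hx hfx

theorem det_exp_kernel_pos_general (n : ℕ) (x y : Fin n → ℝ)
    (hx : StrictAnti x) (hy : StrictAnti y) :
    0 < Matrix.det (Matrix.of fun i j : Fin n => Real.exp (x i * y j)) := by
  let path (s : ℝ) : Fin n → ℝ := fun j => (1 - s) * y j + s * x j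
  have path_injective : ∀ s ∈ Icc (0 : ℝ) 1, Injective (path s) := by
    rintro s ⟨hs0, hs1⟩
    rcases hs1.lt_or_eq with hs1 | rfl
    · exact ((hy.const_mul (by linarith)).add_antitone (hx.antitone.const_mul hs0)).injective
    · simpa [path] using hx.injective
  have hcont : Continuous fun s => (of fun i j => exp (x i * path s j)).det := by fun_prop
  have := isPreconnected_Icc.pos_of_ne_zero hcont.continuousOn
    (fun s hs => det_exp_mul_ne_zero hx.injective (path_injective s hs))
    (left_mem_Icc.mpr zero_le_one) (right_mem_Icc.mpr zero_le_one)
    (by simpa [path] using (posDef_exp_mul_self hx.injective).det_pos)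
  simpa [path] using this

/-- Strict total positivity of the exponential kernel, classical case: for strictly
decreasing `x` and `y`, the determinant `det(exp(x_i y_j))` is strictly positive. -/
theorem det_exp_kernel_pos (n : ℕ) (hn : 0 < n) (x y : Fin n → ℝ)
    (hx : StrictAnti x) (hy : StrictAnti y) :
    0 < Matrix.det (Matrix.of fun i j : Fin n => Real.exp (x i * y j)) :=
  det_exp_kernel_pos_general n x y hx hy
end
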